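/- arXiv:2209.12956 — 6 statements merged into one kernel-verified Lean document; each statement's English description precedes it below -/
import Mathlib

section
/- Let C be a positive integer, X ∈ ℝ^{C×C} symmetric positive definite, v̂ ∈ ℝ^C, and for each n ∈ {1, …, C} let φ_n : ℝ → ℝ be nonincreasing. Then there is at most one q ∈ ℝ^C satisfying q_n = φ_n((X q + v̂)_n) for every n; that is, the equilibrium equation q = φ(Xq + v̂) (with φ acting componentwise) has at most one solution. -/
/-- Uniqueness of the equilibrium: if `X` is symmetric positive definite and
each `φ n` is nonincreasing, then the equilibrium equation
`q n = φ n ((X *ᵥ q + v̂) n)` has at most one solution. -/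
theorem stmt_2 (C : ℕ) (hC : 0 < C) (X : Matrix (Fin C) (Fin C) ℝ)
    (hX : X.PosDef) (vhat : Fin C → ℝ)
    (φ : Fin C → ℝ → ℝ) (hφ : ∀ n, Antitone (φ n)) :
    ∀ q q' : Fin C → ℝ,
      (∀ n, q n = φ n ((X.mulVec q + vhat) n)) →
      (∀ n, q' n = φ n ((X.mulVec q' + vhat) n)) →
      q = q' := by
  intro q q' hq hq'
  set d : Fin C → ℝ := q - q' with hd
  by_contra hne
  have hdne : d ≠ 0 := by
    intro h
    exact hne (by simpa [hd, sub_eq_zero] using h)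
  have hXd : X.mulVec d = X.mulVec q - X.mulVec q' := by
    simp [hd, Matrix.mulVec_sub]
  have key : ∀ n, d n * (X.mulVec d) n ≤ 0 := by
    intro n
    have hdn : d n = φ n ((X.mulVec q + vhat) n) - φ n ((X.mulVec q' + vhat) n) := by
      simp [hd, hq n, hq' n]
    have hXdn : (X.mulVec d) n = (X.mulVec q + vhat) n - (X.mulVec q' + vhat) n := by
      simp [hXd]
    rcases le_total ((X.mulVec q + vhat) n) ((X.mulVec q' + vhat) n) with h | h
    · have h1 : d n ≥ 0 := by
        rw [hdn]; exact sub_nonneg.mpr (hφ n h)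
      have h2 : (X.mulVec d) n ≤ 0 := by rw [hXdn]; linarith
      exact mul_nonpos_of_nonneg_of_nonpos h1 h2
    · have h1 : d n ≤ 0 := by
        rw [hdn]; exact sub_nonpos.mpr (hφ n h)
      have h2 : (X.mulVec d) n ≥ 0 := by rw [hXdn]; linarith
      exact mul_nonpos_of_nonpos_of_nonneg h1 h2
  have hpos : 0 < dotProduct d (X.mulVec d) := by
    have := hX.re_dotProduct_pos hdne
    simpa [dotProduct] using this
  have hle : dotProduct d (X.mulVec d) ≤ 0 := by
    unfold dotProduct
    exact Finset.sum_nonpos fun n _ => key n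
  linarith
end

section
/- Let C be a positive integer, X ∈ ℝ^{C×C} symmetric positive definite, v̂ ∈ ℝ^C, and L ≥ 0. For each n ∈ {1, …, C} let φ_n : ℝ → ℝ be L-Lipschitz and nonincreasing, and define φ : ℝ^C → ℝ^C componentwise. If 0 < ε < min{1, 2/(‖X‖L + 1)²}, then there exists a unique q♯ ∈ ℝ^C with q♯ = φ(X q♯ + v̂), and for every initial condition q(0) ∈ ℝ^C the sequence defined by q(t+1) = q(t) + ε(φ(X q(t) + v̂) − q(t)) converges to q♯ as t → ∞; moreover the voltages v(t) = X q(t) + v̂ converge to v♯ = X q♯ + v̂. -/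
/-!
Differences of the iteration split as `F q - F p = (1 - ε) u + ε d`, with `u = q - p` and `d` the
increment of the componentwise nonlinearity between the voltages `X q + v̂` and `X p + v̂`.
Factor `X = Bᵀ B` with `B` invertible and measure in the weighted norm `‖B ·‖`: the cross term
`⟪B u, B d⟫ = ⟪X u, d⟫` is nonpositive because each `φ n` is nonincreasing, and
`‖B d‖ ≤ ‖X‖ L ‖B u‖` because each `φ n` is `L`-Lipschitz. Hence `F` contracts this norm by
`√((1 - ε)² + (ε ‖X‖ L)²)`, which the stepsize condition makes `< 1`. Conjugated by `B`, `F`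
becomes a contraction of Euclidean space, and Banach's fixed point theorem gives the unique
equilibrium and global convergence; the voltages follow by continuity.
-/

open scoped Matrix.Norms.L2Operator MatrixOrder InnerProductSpace
open Matrix Filter Topology Function ContinuousLinearMap

theorem ContractingWith.exists_isFixedPt_iff_tendsto_iterate_of_semiconj {α β : Type*}
    [TopologicalSpace α] [MetricSpace β] [CompleteSpace β] [Nonempty β] {f : β → β} {K : NNReal}
    (hf : ContractingWith K f) {F : α → α} (e : α ≃ₜ β) (hconj : Semiconj e F f) :
    ∃ p, (∀ q, IsFixedPt F q ↔ q = p) ∧ ∀ q, Tendsto (fun t ↦ F^[t] q) atTop (𝓝 p) := by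
  refine ⟨e.symm (hf.fixedPoint f), fun q ↦ ?_, fun q ↦ ?_⟩
  · rw [IsFixedPt, ← e.injective.eq_iff, hconj q, e.eq_symm_apply]
    exact ⟨hf.fixedPoint_unique, fun h ↦ h ▸ hf.fixedPoint_isFixedPt⟩
  · refine ((e.symm.continuous.tendsto _).comp (hf.tendsto_iterate_fixedPoint (e q))).congr
      fun t ↦ ?_
    simp [← (hconj.iterate_right t) q]

theorem ContinuousLinearEquiv.contractingWith_conj {𝕜 E F : Type*} [NormedField 𝕜]
    [NormedAddCommGroup E] [NormedAddCommGroup F] [NormedSpace 𝕜 E] [NormedSpace 𝕜 F]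
    (S : E ≃L[𝕜] F) {G : E → E} {K : NNReal}
    (hK : K < 1) (hG : ∀ q p, ‖S (G q - G p)‖ ≤ K * ‖S (q - p)‖) :
    ContractingWith K (S ∘ G ∘ S.symm) := by
  refine ⟨hK, LipschitzWith.of_dist_le_mul fun x y ↦ ?_⟩
  simpa [dist_eq_norm] using hG (S.symm x) (S.symm y)

theorem sqrt_sq_one_sub_add_sq_mul_mul_lt_one {ε M L : ℝ} (hM : 0 ≤ M) (hL : 0 ≤ L)
    (hε0 : 0 < ε) (hε : ε < 2 / (M * L + 1) ^ 2) : √((1 - ε) ^ 2 + (ε * M * L) ^ 2) < 1 := by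
  rw [lt_div_iff₀ (by positivity)] at hε
  rw [Real.sqrt_lt' one_pos]
  nlinarith [mul_nonneg hε0.le (mul_nonneg hM hL)]

section WeightedNorm

variable {E F : Type*} [NormedAddCommGroup E] [InnerProductSpace ℝ E] [CompleteSpace E]
  [NormedAddCommGroup F] [InnerProductSpace ℝ F] [CompleteSpace F]

theorem ContinuousLinearMap.norm_apply_smul_add_smul_le (S : E →L[ℝ] F) {u d : E} {L ε : ℝ}
    (hL : 0 ≤ L) (hε0 : 0 ≤ ε) (hε1 : ε ≤ 1)
    (hmono : ⟪(adjoint S ∘L S) u, d⟫_ℝ ≤ 0) (hlip : ‖d‖ ≤ L * ‖(adjoint S ∘L S) u‖) :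
    ‖S ((1 - ε) • u + ε • d)‖ ≤ √((1 - ε) ^ 2 + (ε * ‖adjoint S ∘L S‖ * L) ^ 2) * ‖S u‖ := by
  have hcross : ⟪S u, S d⟫_ℝ ≤ 0 := by rwa [← adjoint_inner_left]
  have hSd : ‖S d‖ ≤ ‖adjoint S ∘L S‖ * L * ‖S u‖ := calc
    ‖S d‖ ≤ ‖S‖ * ‖d‖ := S.le_opNorm d
    _ ≤ ‖S‖ * (L * (‖adjoint S‖ * ‖S u‖)) := by
      gcongr
      exact hlip.trans (by gcongr; exact (adjoint S).le_opNorm (S u))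
    _ = ‖adjoint S ∘L S‖ * L * ‖S u‖ := by
      rw [norm_adjoint_comp_self, LinearIsometryEquiv.norm_map]; ring
  have hε : 0 ≤ (1 - ε) * ε := mul_nonneg (by linarith) hε0
  rw [← pow_le_pow_iff_left₀ (norm_nonneg _) (by positivity) two_ne_zero, mul_pow,
    Real.sq_sqrt (by positivity), map_add, map_smul, map_smul, norm_add_sq_real, norm_smul,
    norm_smul, real_inner_smul_left, real_inner_smul_right, Real.norm_of_nonneg hε0,
    Real.norm_of_nonneg (by linarith)]
  nlinarith [mul_nonpos_of_nonneg_of_nonpos hε hcross,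
    pow_le_pow_left₀ (by positivity) (mul_le_mul_of_nonneg_left hSd hε0) 2]

end WeightedNorm

open scoped ComplexOrder in
theorem Matrix.PosDef.exists_toEuclideanCLM_eq_adjoint_comp_self {𝕜 ι : Type*} [RCLike 𝕜]
    [Fintype ι] [DecidableEq ι] {X : Matrix ι ι 𝕜} (hX : X.PosDef) :
    ∃ S : EuclideanSpace 𝕜 ι ≃L[𝕜] EuclideanSpace 𝕜 ι,
      toEuclideanCLM (𝕜 := 𝕜) X = adjoint S.toContinuousLinearMap ∘L S.toContinuousLinearMap := by
  obtain ⟨B, rfl⟩ := CStarAlgebra.nonneg_iff_eq_star_mul_self.mp hX.posSemidef.nonneg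
  have hB : IsUnit B := by
    have h := hX.isUnit
    rw [isUnit_iff_isUnit_det, det_mul] at h
    exact (isUnit_iff_isUnit_det B).2 (isUnit_of_mul_isUnit_right h)
  refine ⟨ContinuousLinearEquiv.unitsEquiv 𝕜 _ (hB.map (toEuclideanCLM (𝕜 := 𝕜) (n := ι))).unit,
    ?_⟩
  rw [map_mul, map_star, star_eq_adjoint]
  rfl

section VoltVar

variable {ι : Type*}

noncomputable def componentwise (φ : ι → ℝ → ℝ) (v : EuclideanSpace ℝ ι) : EuclideanSpace ℝ ι :=
  WithLp.toLp 2 fun n ↦ φ n (v n)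

@[simp] theorem componentwise_apply (φ : ι → ℝ → ℝ) (v : EuclideanSpace ℝ ι) (n : ι) :
    componentwise φ v n = φ n (v n) := rfl

noncomputable def voltVarStep (T : EuclideanSpace ℝ ι →L[ℝ] EuclideanSpace ℝ ι)
    (φ : ι → ℝ → ℝ) (vhat : EuclideanSpace ℝ ι) (ε : ℝ) (q : EuclideanSpace ℝ ι) :
    EuclideanSpace ℝ ι :=
  q + ε • (componentwise φ (T q + vhat) - q)

theorem isFixedPt_voltVarStep_iff {T : EuclideanSpace ℝ ι →L[ℝ] EuclideanSpace ℝ ι}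
    {φ : ι → ℝ → ℝ} {vhat : EuclideanSpace ℝ ι} {ε : ℝ} (hε : ε ≠ 0) {q : EuclideanSpace ℝ ι} :
    IsFixedPt (voltVarStep T φ vhat ε) q ↔ ∀ n, q n = φ n ((T q + vhat) n) := by
  rw [IsFixedPt, voltVarStep, add_eq_left, smul_eq_zero_iff_right hε, sub_eq_zero, WithLp.ext_iff,
    funext_iff]
  exact forall_congr' fun n ↦ eq_comm

variable [Fintype ι]

theorem inner_sub_componentwise_sub_nonpos {φ : ι → ℝ → ℝ} (hmono : ∀ n, Antitone (φ n))
    (v w : EuclideanSpace ℝ ι) : ⟪v - w, componentwise φ v - componentwise φ w⟫_ℝ ≤ 0 := by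
  rw [PiLp.inner_apply]
  refine Finset.sum_nonpos fun n _ ↦ ?_
  simp only [PiLp.sub_apply, componentwise_apply, RCLike.inner_apply, conj_trivial]
  rcases le_total (v n) (w n) with h | h
  · exact mul_nonpos_of_nonneg_of_nonpos (sub_nonneg.2 (hmono n h)) (sub_nonpos.2 h)
  · exact mul_nonpos_of_nonpos_of_nonneg (sub_nonpos.2 (hmono n h)) (sub_nonneg.2 h)

theorem norm_componentwise_sub_le {φ : ι → ℝ → ℝ} {L : ℝ} (hL : 0 ≤ L)
    (hlip : ∀ n x y, |φ n x - φ n y| ≤ L * |x - y|) (v w : EuclideanSpace ℝ ι) :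
    ‖componentwise φ v - componentwise φ w‖ ≤ L * ‖v - w‖ := by
  rw [EuclideanSpace.norm_eq, EuclideanSpace.norm_eq, ← Real.sqrt_sq hL,
    ← Real.sqrt_mul (sq_nonneg L), Finset.mul_sum]
  gcongr with n
  simp only [PiLp.sub_apply, componentwise_apply, Real.norm_eq_abs, ← mul_pow]
  exact pow_le_pow_left₀ (abs_nonneg _) (hlip n _ _) 2

theorem norm_apply_voltVarStep_sub_le {F : Type*} [NormedAddCommGroup F] [InnerProductSpace ℝ F]
    [CompleteSpace F] (S : EuclideanSpace ℝ ι →L[ℝ] F) {φ : ι → ℝ → ℝ} {L ε : ℝ} (hL : 0 ≤ L)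
    (hlip : ∀ n x y, |φ n x - φ n y| ≤ L * |x - y|) (hmono : ∀ n, Antitone (φ n))
    (hε0 : 0 ≤ ε) (hε1 : ε ≤ 1) (vhat q p : EuclideanSpace ℝ ι) :
    ‖S (voltVarStep (adjoint S ∘L S) φ vhat ε q - voltVarStep (adjoint S ∘L S) φ vhat ε p)‖ ≤
      √((1 - ε) ^ 2 + (ε * ‖adjoint S ∘L S‖ * L) ^ 2) * ‖S (q - p)‖ := by
  set T := adjoint S ∘L S
  have hv : T (q - p) = (T q + vhat) - (T p + vhat) := by rw [map_sub]; abel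
  have hstep : voltVarStep T φ vhat ε q - voltVarStep T φ vhat ε p = (1 - ε) • (q - p) +
      ε • (componentwise φ (T q + vhat) - componentwise φ (T p + vhat)) := by
    simp only [voltVarStep]; module
  rw [hstep]
  refine S.norm_apply_smul_add_smul_le hL hε0 hε1 ?_ ?_
  · rw [hv]; exact inner_sub_componentwise_sub_nonpos hmono _ _
  · rw [hv]; exact norm_componentwise_sub_le hL hlip _ _

end VoltVar

theorem stmt_9_general (C : ℕ) (L : ℝ) (hL : 0 ≤ L)
    (X : Matrix (Fin C) (Fin C) ℝ) (hX : X.PosDef)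
    (vhat : EuclideanSpace ℝ (Fin C))
    (φ : Fin C → ℝ → ℝ)
    (hlip : ∀ n x y, |φ n x - φ n y| ≤ L * |x - y|)
    (hmono : ∀ n, Antitone (φ n))
    (ε : ℝ) (hε0 : 0 < ε) (hε : ε < min 1 (2 / (‖X‖ * L + 1) ^ 2))
    (F : EuclideanSpace ℝ (Fin C) → EuclideanSpace ℝ (Fin C))
    (hF : ∀ q n, F q n = q n + ε * (φ n (X.mulVec q n + vhat n) - q n)) :
    ∃ qs : EuclideanSpace ℝ (Fin C),
      (∀ n, qs n = φ n (X.mulVec qs n + vhat n)) ∧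
      (∀ q : EuclideanSpace ℝ (Fin C),
        (∀ n, q n = φ n (X.mulVec q n + vhat n)) → q = qs) ∧
      (∀ q0 : EuclideanSpace ℝ (Fin C),
        Filter.Tendsto (fun t => F^[t] q0) Filter.atTop (nhds qs)) ∧
      (∀ q0 : EuclideanSpace ℝ (Fin C),
        Filter.Tendsto
          (fun t => (WithLp.toLp 2 (fun n => X.mulVec (F^[t] q0) n + vhat n) : EuclideanSpace ℝ (Fin C)))
          Filter.atTop (nhds (WithLp.toLp 2 (fun n => X.mulVec qs n + vhat n) : EuclideanSpace ℝ (Fin C)))) := by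
  obtain ⟨S, hS⟩ := hX.exists_toEuclideanCLM_eq_adjoint_comp_self
  set T := toEuclideanCLM (𝕜 := ℝ) (n := Fin C) X
  have hFstep : F = voltVarStep T φ vhat ε := by
    funext q; ext n; simp [hF, voltVarStep, T]
  subst hFstep
  have hK := sqrt_sq_one_sub_add_sq_mul_mul_lt_one (norm_nonneg T) hL hε0
    (hε.trans_le (min_le_right _ _))
  have hstep := norm_apply_voltVarStep_sub_le S.toContinuousLinearMap hL hlip hmono hε0.le
    (hε.le.trans (min_le_left _ _)) vhat
  rw [← hS] at hstep
  obtain ⟨qs, hfix, hconv⟩ := (S.contractingWith_conj (K := ⟨_, Real.sqrt_nonneg _⟩) hK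
    hstep).exists_isFixedPt_iff_tendsto_iterate_of_semiconj S.toHomeomorph
    (F := voltVarStep T φ vhat ε) (fun q ↦ by simp)
  refine ⟨qs, (isFixedPt_voltVarStep_iff hε0.ne').1 ((hfix qs).2 rfl),
    fun q hq ↦ (hfix q).1 ((isFixedPt_voltVarStep_iff hε0.ne').2 hq), hconv, fun q0 ↦ ?_⟩
  exact ((T.continuous.add continuous_const).tendsto qs).comp (hconv q0)

/-- Global asymptotic stability of the incremental Volt/Var control rule:
under conditions C1)-C2) on the `φ n` and the stepsize condition
`0 < ε < min {1, 2/(‖X‖L+1)²}`, there exists a unique equilibrium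
`q♯ = φ(X q♯ + v̂)`, the iterates `q(t+1) = q(t) + ε (φ(X q(t) + v̂) - q(t))`
converge to `q♯` from every initial condition, and the voltages
`v(t) = X q(t) + v̂` converge to `v♯ = X q♯ + v̂`. -/
theorem stmt_9 (C : ℕ) (hC : 0 < C) (L : ℝ) (hL : 0 ≤ L)
    (X : Matrix (Fin C) (Fin C) ℝ) (hX : X.PosDef)
    (vhat : EuclideanSpace ℝ (Fin C))
    (φ : Fin C → ℝ → ℝ)
    (hlip : ∀ n x y, |φ n x - φ n y| ≤ L * |x - y|)
    (hmono : ∀ n, Antitone (φ n))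
    (ε : ℝ) (hε0 : 0 < ε) (hε : ε < min 1 (2 / (‖X‖ * L + 1) ^ 2))
    (F : EuclideanSpace ℝ (Fin C) → EuclideanSpace ℝ (Fin C))
    (hF : ∀ q n, F q n = q n + ε * (φ n (X.mulVec q n + vhat n) - q n)) :
    ∃ qs : EuclideanSpace ℝ (Fin C),
      (∀ n, qs n = φ n (X.mulVec qs n + vhat n)) ∧
      (∀ q : EuclideanSpace ℝ (Fin C),
        (∀ n, q n = φ n (X.mulVec q n + vhat n)) → q = qs) ∧
      (∀ q0 : EuclideanSpace ℝ (Fin C),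
        Filter.Tendsto (fun t => F^[t] q0) Filter.atTop (nhds qs)) ∧
      (∀ q0 : EuclideanSpace ℝ (Fin C),
        Filter.Tendsto
          (fun t => (WithLp.toLp 2 (fun n => X.mulVec (F^[t] q0) n + vhat n) : EuclideanSpace ℝ (Fin C)))
          Filter.atTop (nhds (WithLp.toLp 2 (fun n => X.mulVec qs n + vhat n) : EuclideanSpace ℝ (Fin C)))) :=
  stmt_9_general C L hL X hX vhat φ hlip hmono ε hε0 hε F hF
end

section
/- Let C be a positive integer, X ∈ ℝ^{C×C} symmetric positive definite, v̂ ∈ ℝ^C, and L ≥ 0 with ‖X‖ L < √2 − 1. For each n ∈ {1, …, C} let φ_n : ℝ → ℝ be L-Lipschitz and nonincreasing, and define φ : ℝ^C → ℝ^C componentwise. Then the map h : ℝ^C → ℝ^C, h(v) = X φ(v) + v̂, is a contraction (there exists k < 1 with ‖h(v) − h(v′)‖ ≤ k‖v − v′‖ for all v, v′), and consequently, for every initial condition q(0) ∈ ℝ^C, the non-incremental iterates q(t+1) = φ(X q(t) + v̂) converge to the unique point q♯ satisfying q♯ = φ(X q♯ + v̂). -/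
/-!
Both maps are compositions of the componentwise map `φ`, which is `L`-Lipschitz for the
Euclidean norm because each coordinate is, with the affine map `q ↦ X q + v̂`, which is
`‖X‖`-Lipschitz. Hence `h = (X · + v̂) ∘ φ` and `G = φ ∘ (X · + v̂)` are both Lipschitz with
constant `‖X‖ L < √2 - 1 < 1`, and Banach's fixed point theorem applied to `G` gives the
unique equilibrium `q♯` and the convergence of the iterates.
-/

open scoped Matrix.Norms.L2Operator NNReal

namespace EuclideanSpace

variable {ι : Type*} [Fintype ι]

theorem norm_le_mul_norm_of_abs_apply_le {u w : EuclideanSpace ℝ ι} {L : ℝ} (hL : 0 ≤ L)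
    (huw : ∀ i, |u i| ≤ L * |w i|) : ‖u‖ ≤ L * ‖w‖ := by
  rw [EuclideanSpace.norm_eq, EuclideanSpace.norm_eq, ← Real.sqrt_sq hL,
    ← Real.sqrt_mul (sq_nonneg L), Finset.mul_sum]
  gcongr with i
  rw [Real.norm_eq_abs, Real.norm_eq_abs, ← mul_pow]
  exact pow_le_pow_left₀ (abs_nonneg _) (huw i) 2

def piMap (φ : ι → ℝ → ℝ) (v : EuclideanSpace ℝ ι) : EuclideanSpace ℝ ι :=
  WithLp.toLp 2 fun i => φ i (v i)

theorem lipschitzWith_piMap {φ : ι → ℝ → ℝ} {K : ℝ≥0} (hφ : ∀ i, LipschitzWith K (φ i)) :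
    LipschitzWith K (piMap φ) :=
  LipschitzWith.of_dist_le_mul fun v w => by
    rw [dist_eq_norm, dist_eq_norm]
    refine norm_le_mul_norm_of_abs_apply_le K.2 fun i => ?_
    simpa [piMap, ← Real.dist_eq] using (hφ i).dist_le_mul (v i) (w i)

end EuclideanSpace

theorem Matrix.lipschitzWith_toEuclideanCLM_add {n : Type*} [Fintype n] [DecidableEq n]
    (A : Matrix n n ℝ) (b : EuclideanSpace ℝ n) :
    LipschitzWith ‖A‖₊ fun x => toEuclideanCLM (𝕜 := ℝ) A x + b := by
  refine LipschitzWith.of_dist_le_mul fun x y => ?_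
  rw [dist_add_right, dist_eq_norm, dist_eq_norm, ← map_sub, coe_nnnorm,
    ← l2_opNorm_toEuclideanCLM]
  exact (toEuclideanCLM (𝕜 := ℝ) A).le_opNorm (x - y)

theorem stmt_10_general (C : ℕ) (L : ℝ) (hL : 0 ≤ L)
    (X : Matrix (Fin C) (Fin C) ℝ)
    (hslope : ‖X‖ * L < Real.sqrt 2 - 1)
    (vhat : EuclideanSpace ℝ (Fin C))
    (φ : Fin C → ℝ → ℝ)
    (hlip : ∀ n x y, |φ n x - φ n y| ≤ L * |x - y|)
    (h : EuclideanSpace ℝ (Fin C) → EuclideanSpace ℝ (Fin C))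
    (hh : ∀ v n, h v n = X.mulVec (fun m => φ m (v m)) n + vhat n)
    (G : EuclideanSpace ℝ (Fin C) → EuclideanSpace ℝ (Fin C))
    (hG : ∀ q n, G q n = φ n (X.mulVec q n + vhat n)) :
    (∃ k : ℝ, k < 1 ∧ ∀ v v' : EuclideanSpace ℝ (Fin C),
        ‖h v - h v'‖ ≤ k * ‖v - v'‖) ∧
    ∃ qs : EuclideanSpace ℝ (Fin C),
      (∀ n, qs n = φ n (X.mulVec qs n + vhat n)) ∧
      (∀ q : EuclideanSpace ℝ (Fin C),
        (∀ n, q n = φ n (X.mulVec q n + vhat n)) → q = qs) ∧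
      ∀ q0 : EuclideanSpace ℝ (Fin C),
        Filter.Tendsto (fun t => G^[t] q0) Filter.atTop (nhds qs) := by
  set A := fun q => Matrix.toEuclideanCLM (𝕜 := ℝ) X q + vhat
  have hA : LipschitzWith ‖X‖₊ A := X.lipschitzWith_toEuclideanCLM_add vhat
  have hΦ : LipschitzWith L.toNNReal (EuclideanSpace.piMap φ) :=
    EuclideanSpace.lipschitzWith_piMap fun n =>
      LipschitzWith.of_dist_le' fun x y => by simpa only [Real.dist_eq] using hlip n x y
  have h_lip : LipschitzWith (‖X‖₊ * L.toNNReal) h := by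
    convert hA.comp hΦ
    funext v; ext n; simp [hh, A, EuclideanSpace.piMap]
  have G_lip : LipschitzWith (L.toNNReal * ‖X‖₊) G := by
    convert hΦ.comp hA
    funext q; ext n; simp [hG, A, EuclideanSpace.piMap]
  have hk : ‖X‖ * L < 1 := by
    nlinarith [Real.sq_sqrt (zero_le_two (α := ℝ)), Real.sqrt_nonneg 2]
  have hGc : ContractingWith (L.toNNReal * ‖X‖₊) G :=
    ⟨by rw [← NNReal.coe_lt_coe]; simpa [hL, mul_comm] using hk, G_lip⟩
  have fixed_iff (q) : Function.IsFixedPt G q ↔ ∀ n, q n = φ n (X.mulVec q n + vhat n) := by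
    simp [Function.IsFixedPt, PiLp.ext_iff, hG, eq_comm]
  refine ⟨⟨‖X‖ * L, hk, fun v v' => ?_⟩, ContractingWith.fixedPoint G hGc,
    (fixed_iff _).1 hGc.fixedPoint_isFixedPt,
    fun q hq => hGc.fixedPoint_unique ((fixed_iff q).2 hq), hGc.tendsto_iterate_fixedPoint⟩
  simpa [dist_eq_norm, hL] using h_lip.dist_le_mul v v'

/-- Stability of the non-incremental Volt/Var rule under the slope condition
`‖X‖ L < √2 - 1`: the map `h(v) = X φ(v) + v̂` is a contraction, and the
iterates `q(t+1) = φ(X q(t) + v̂)` converge, from every initial condition,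
to the unique point `q♯` with `q♯ = φ(X q♯ + v̂)`. -/
theorem stmt_10 (C : ℕ) (hC : 0 < C) (L : ℝ) (hL : 0 ≤ L)
    (X : Matrix (Fin C) (Fin C) ℝ) (hX : X.PosDef)
    (hslope : ‖X‖ * L < Real.sqrt 2 - 1)
    (vhat : EuclideanSpace ℝ (Fin C))
    (φ : Fin C → ℝ → ℝ)
    (hlip : ∀ n x y, |φ n x - φ n y| ≤ L * |x - y|)
    (hmono : ∀ n, Antitone (φ n))
    (h : EuclideanSpace ℝ (Fin C) → EuclideanSpace ℝ (Fin C))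
    (hh : ∀ v n, h v n = X.mulVec (fun m => φ m (v m)) n + vhat n)
    (G : EuclideanSpace ℝ (Fin C) → EuclideanSpace ℝ (Fin C))
    (hG : ∀ q n, G q n = φ n (X.mulVec q n + vhat n)) :
    (∃ k : ℝ, k < 1 ∧ ∀ v v' : EuclideanSpace ℝ (Fin C),
        ‖h v - h v'‖ ≤ k * ‖v - v'‖) ∧
    ∃ qs : EuclideanSpace ℝ (Fin C),
      (∀ n, qs n = φ n (X.mulVec qs n + vhat n)) ∧
      (∀ q : EuclideanSpace ℝ (Fin C),
        (∀ n, q n = φ n (X.mulVec q n + vhat n)) → q = qs) ∧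
      ∀ q0 : EuclideanSpace ℝ (Fin C),
        Filter.Tendsto (fun t => G^[t] q0) Filter.atTop (nhds qs) :=
  stmt_10_general C L hL X hslope vhat φ hlip h hh G hG
end

section
/- Let H be a positive integer, w ∈ ℝ^H, β ∈ ℝ, and b ∈ ℝ^H with strictly increasing entries b_1 < b_2 < ⋯ < b_H. Define N : ℝ → ℝ by N(x) = Σ_{h=1}^H w_h max(x − b_h, 0) + β. Then N is nonincreasing on ℝ if and only if Σ_{j=1}^J w_j ≤ 0 for every J ∈ {1, 2, …, H}. -/
open Finset

lemma relu_diff_anti (x y c d : ℝ) (hxy : x ≤ y) (hcd : c ≤ d) :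
    max (y - d) 0 - max (x - d) 0 ≤ max (y - c) 0 - max (x - c) 0 := by
  simp only [max_def]
  split_ifs <;> linarith

lemma relu_diff_nonneg (x y c : ℝ) (hxy : x ≤ y) :
    0 ≤ max (y - c) 0 - max (x - c) 0 :=
  sub_nonneg.2 (max_le_max (by linarith) le_rfl)

/-- For the single-hidden-layer ReLU network
`N(x) = Σ_h w_h ReLU(x - b_h) + β` with strictly increasing biases, `N` is
nonincreasing iff all the partial sums of the weights are nonpositive. -/
theorem stmt_11 (H : ℕ) (hH : 0 < H) (w : Fin H → ℝ) (β : ℝ)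
    (b : Fin H → ℝ) (hb : StrictMono b) :
    Antitone (fun x : ℝ => (∑ h : Fin H, w h * max (x - b h) 0) + β) ↔
      ∀ J : Fin H, ∑ j ∈ Finset.Iic J, w j ≤ 0 := by
  constructor
  · -- forward
    intro hA J
    obtain ⟨x₂, hx₁, hx₂⟩ : ∃ x₂, b J < x₂ ∧ ∀ j, J < j → x₂ ≤ b j := by
      by_cases h : (J : ℕ) + 1 < H
      · refine ⟨(b J + b ⟨(J : ℕ) + 1, h⟩) / 2, ?_, ?_⟩
        · have := hb (show J < ⟨(J : ℕ) + 1, h⟩ by simp [Fin.lt_def]); linarith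
        · intro j hj
          have h1 : b ⟨(J : ℕ) + 1, h⟩ ≤ b j := hb.monotone (by simp [Fin.le_def]; omega)
          have := hb (show J < ⟨(J : ℕ) + 1, h⟩ by simp [Fin.lt_def])
          linarith
      · exact ⟨b J + 1, by linarith, fun j hj => absurd j.isLt (by have := Fin.lt_def.1 hj; omega)⟩
    have key := hA hx₁.le
    simp only at key
    have hdiff : (∑ h : Fin H, w h * max (x₂ - b h) 0) -
        (∑ h : Fin H, w h * max (b J - b h) 0) = (x₂ - b J) * ∑ j ∈ Finset.Iic J, w j := by
      rw [← Finset.sum_sub_distrib, Finset.mul_sum]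
      rw [← Finset.sum_subset (Finset.subset_univ (Finset.Iic J))]
      · refine Finset.sum_congr rfl fun h hh => ?_
        rw [Finset.mem_Iic] at hh
        have h1 : b h ≤ b J := hb.monotone hh
        rw [max_eq_left (by linarith), max_eq_left (by linarith)]
        ring
      · intro h _ hh
        rw [Finset.mem_Iic] at hh
        have hJh : J < h := lt_of_not_ge hh
        have h1 : b J < b h := hb hJh
        have h2 : x₂ ≤ b h := hx₂ h hJh
        rw [max_eq_right (by linarith), max_eq_right (by linarith)]
        ring
    have hle : (x₂ - b J) * ∑ j ∈ Finset.Iic J, w j ≤ 0 := by rw [← hdiff]; linarith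
    nlinarith [hle, sub_pos.2 hx₁]
  · -- backward
    intro hS x y hxy
    simp only
    set w' : ℕ → ℝ := fun i => if h : i < H then w ⟨i, h⟩ else 0 with hw'
    set b' : ℕ → ℝ := fun i => if h : i < H then b ⟨i, h⟩ else 0 with hb'
    have hwv : ∀ j : Fin H, w' j = w j := fun j => by simp [hw']
    have hbv : ∀ j : Fin H, b' j = b j := fun j => by simp [hb']
    -- partial sums over range are nonpositive
    have hSR : ∀ n : ℕ, 0 < n → n ≤ H → ∑ i ∈ range n, w' i ≤ 0 := by
      intro n hn hnH
      have hJ : n - 1 < H := by omega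
      have := hS ⟨n - 1, hJ⟩
      have hmap : (Finset.Iic (⟨n - 1, hJ⟩ : Fin H)).map Fin.valEmbedding = range n := by
        ext i
        simp only [Finset.mem_map, Finset.mem_Iic, Fin.valEmbedding_apply, mem_range]
        constructor
        · rintro ⟨j, hj, rfl⟩
          have := Fin.le_def.1 hj; simp at this; omega
        · intro hi
          exact ⟨⟨i, by omega⟩, Fin.le_def.2 (by simp; omega), rfl⟩
      calc ∑ i ∈ range n, w' i = ∑ j ∈ Finset.Iic (⟨n - 1, hJ⟩ : Fin H), w j := by
            rw [← hmap, Finset.sum_map]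
            exact Finset.sum_congr rfl fun j _ => hwv j
        _ ≤ 0 := this
    -- rewrite as range sum and apply Abel summation
    have hconv : ∀ z : ℝ, ∑ h : Fin H, w h * max (z - b h) 0 =
        ∑ i ∈ range H, w' i * max (z - b' i) 0 := by
      intro z
      rw [← Fin.sum_univ_eq_sum_range (fun i => w' i * max (z - b' i) 0) H]
      exact Finset.sum_congr rfl fun h _ => by rw [hwv, hbv]
    rw [hconv, hconv, add_le_add_iff_right, ← sub_nonpos, ← Finset.sum_sub_distrib]
    have hterm : ∀ i, w' i * max (y - b' i) 0 - w' i * max (x - b' i) 0 =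
        (max (y - b' i) 0 - max (x - b' i) 0) • w' i := by
      intro i; simp [smul_eq_mul]; ring
    simp_rw [hterm]
    rw [Finset.sum_range_by_parts (fun i => max (y - b' i) 0 - max (x - b' i) 0) w' H]
    have h1 : (max (y - b' (H - 1)) 0 - max (x - b' (H - 1)) 0) • (∑ i ∈ range H, w' i) ≤ 0 := by
      rw [smul_eq_mul]
      exact mul_nonpos_iff.2 (Or.inl ⟨relu_diff_nonneg x y _ hxy, hSR H hH le_rfl⟩)
    have h2 : 0 ≤ ∑ i ∈ range (H - 1),
        ((max (y - b' (i + 1)) 0 - max (x - b' (i + 1)) 0) -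
          (max (y - b' i) 0 - max (x - b' i) 0)) • (∑ j ∈ range (i + 1), w' j) := by
      refine Finset.sum_nonneg fun i hi => ?_
      rw [mem_range] at hi
      have hbi : b' i ≤ b' (i + 1) := by
        have hi1 : i < H := by omega
        have hi2 : i + 1 < H := by omega
        simp only [hb', dif_pos hi1, dif_pos hi2]
        exact (hb.monotone (by simp [Fin.le_def]))
      rw [smul_eq_mul]
      exact mul_nonneg_iff.2 (Or.inr ⟨by linarith [relu_diff_anti x y (b' i) (b' (i+1)) hxy hbi],
        hSR (i + 1) (by omega) (by omega)⟩)
    linarith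
end

section
/- Let H be a positive integer, w ∈ ℝ^H, β ∈ ℝ, and b ∈ ℝ^H with b_1 ≤ b_2 ≤ ⋯ ≤ b_H, and suppose Σ_{j=1}^J w_j ≤ 0 for every J ∈ {1, 2, …, H}. Then N : ℝ → ℝ defined by N(x) = Σ_{h=1}^H w_h max(x − b_h, 0) + β is nonincreasing on ℝ. -/
/-- Abel-type summation bound over `ℕ`. -/
lemma abel_aux (w : ℕ → ℝ) : ∀ (n : ℕ) (d : ℕ → ℝ),
    (∀ J < n, ∑ j ∈ Finset.range (J+1), w j ≤ 0) →
    (∀ j, 0 ≤ d j) → (∀ i j, i ≤ j → d j ≤ d i) →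
    ∑ j ∈ Finset.range n, w j * d j ≤ 0 := by
  intro n
  induction n with
  | zero => intro d _ _ _; simp
  | succ n ih =>
    intro d hw hd0 hdm
    have key : ∑ j ∈ Finset.range (n+1), w j * d j
        = (∑ j ∈ Finset.range n, w j * (d j - d n))
          + (∑ j ∈ Finset.range (n+1), w j) * d n := by
      rw [Finset.sum_range_succ (f := fun j => w j * d j),
          Finset.sum_range_succ (f := w), add_mul, Finset.sum_mul,
          Finset.sum_congr rfl
            (fun j _ => show w j * d j = w j * (d j - d n) + w j * d n by ring),
          Finset.sum_add_distrib]
      ring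
    rw [key]
    apply add_nonpos
    · have := ih (fun j => max (d j - d n) 0)
        (fun J hJ => hw J (Nat.lt_succ_of_lt hJ))
        (fun j => le_max_right _ _)
        (fun i j hij => max_le_max (by linarith [hdm i j hij]) le_rfl)
      calc ∑ j ∈ Finset.range n, w j * (d j - d n)
          = ∑ j ∈ Finset.range n, w j * max (d j - d n) 0 := by
            apply Finset.sum_congr rfl
            intro j hj
            have hjn : j ≤ n := Nat.le_of_lt (Finset.mem_range.mp hj)
            have : d n ≤ d j := hdm j n hjn
            rw [max_eq_left (by linarith)]
        _ ≤ 0 := this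
    · exact mul_nonpos_of_nonpos_of_nonneg (hw n (Nat.lt_succ_self n)) (hd0 n)

lemma relu_diff {x y b b' : ℝ} (hxy : x ≤ y) (hbb : b ≤ b') :
    max (y - b') 0 - max (x - b') 0 ≤ max (y - b) 0 - max (x - b) 0 := by
  simp only [max_def]
  split_ifs <;> linarith

/-- Sufficiency: if the biases are nondecreasing and all partial sums of the
weights are nonpositive, then `N(x) = Σ_h w_h ReLU(x - b_h) + β` is
nonincreasing. -/
theorem stmt_12 (H : ℕ) (hH : 0 < H) (w : Fin H → ℝ) (β : ℝ)
    (b : Fin H → ℝ) (hb : Monotone b)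
    (hw : ∀ J : Fin H, ∑ j ∈ Finset.Iic J, w j ≤ 0) :
    Antitone (fun x : ℝ => (∑ h : Fin H, w h * max (x - b h) 0) + β) := by
  intro x y hxy
  simp only [add_le_add_iff_right]
  rw [← sub_nonpos, ← Finset.sum_sub_distrib]
  have hsum : ∀ h : Fin H, w h * max (y - b h) 0 - w h * max (x - b h) 0
      = w h * (max (y - b h) 0 - max (x - b h) 0) := by intro h; ring
  simp only [hsum]
  -- transfer to ℕ
  set w' : ℕ → ℝ := fun j => if h : j < H then w ⟨j, h⟩ else 0 with hw'
  set d : ℕ → ℝ := fun j =>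
    if h : j < H then max (y - b ⟨j, h⟩) 0 - max (x - b ⟨j, h⟩) 0 else 0 with hd
  have hd0 : ∀ j, 0 ≤ d j := by
    intro j
    simp only [hd]
    split_ifs with h
    · have : max (x - b ⟨j, h⟩) 0 ≤ max (y - b ⟨j, h⟩) 0 :=
        max_le_max (by linarith) le_rfl
      linarith
    · exact le_rfl
  have hdm : ∀ i j, i ≤ j → d j ≤ d i := by
    intro i j hij
    simp only [hd]
    split_ifs with hj hi hi
    · exact relu_diff hxy (hb (show (⟨i, hi⟩ : Fin H) ≤ ⟨j, hj⟩ from hij))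
    · exact absurd (lt_of_le_of_lt hij hj) hi
    · have : max (x - b ⟨i, hi⟩) 0 ≤ max (y - b ⟨i, hi⟩) 0 :=
        max_le_max (by linarith) le_rfl
      linarith
    · exact le_rfl
  have hwp : ∀ J < H, ∑ j ∈ Finset.range (J+1), w' j ≤ 0 := by
    intro J hJ
    have hr : Finset.range (J+1) = Finset.Iic J := by
      ext k; simp [Nat.lt_succ_iff]
    have hmap : ∑ j ∈ Finset.range (J+1), w' j
        = ∑ j ∈ Finset.Iic (⟨J, hJ⟩ : Fin H), w j := by
      rw [hr, show Finset.Iic J = (Finset.Iic (⟨J, hJ⟩ : Fin H)).map Fin.valEmbedding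
        from (Fin.map_valEmbedding_Iic ⟨J, hJ⟩).symm, Finset.sum_map]
      apply Finset.sum_congr rfl
      intro j _
      simp only [Fin.valEmbedding_apply, hw', j.2, dif_pos, Fin.eta]
    rw [hmap]
    exact hw ⟨J, hJ⟩
  have hmain : ∑ h : Fin H, w h * (max (y - b h) 0 - max (x - b h) 0)
      = ∑ j ∈ Finset.range H, w' j * d j := by
    rw [Finset.sum_range fun j => w' j * d j]
    apply Finset.sum_congr rfl
    intro h _
    simp only [hw', hd, h.2, dif_pos, Fin.eta]
  rw [hmain]
  exact abel_aux w' H d hwp hd0 hdm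
end

section
/- Let g : ℝ → ℝ be nonincreasing and L_g-Lipschitz, let a < b be reals, and let η > 0. Then there exist a positive integer H, weights w ∈ ℝ^H satisfying Σ_{j=1}^J w_j ≤ 0 for every J ∈ {1, …, H}, biases b_1 ≤ b_2 ≤ ⋯ ≤ b_H, and β ∈ ℝ such that the function N(x) = Σ_{h=1}^H w_h max(x − b_h, 0) + β satisfies |N(x) − g(x)| ≤ η for all x ∈ [a, b]. Moreover, H can be taken such that H ≥ L_g (b − a)/η. -/
/-!
Interpolate `g` linearly on the uniform grid `a = X 0 ≤ ⋯ ≤ X H = b` of mesh `δ = (b - a) / H`.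
The ReLU network with biases `X j` whose weights are the successive changes of the secant slopes
is exactly this interpolant, and its partial sums of weights are the slopes themselves, which are
`≤ 0` since `g` is antitone. On a cell `[X k, X (k + 1)]` both `g` and the interpolant lie between
`g (X (k + 1))` and `g (X k)`, which differ by at most `Lg * δ ≤ η`.
-/

open Finset

def increments {G : Type*} [AddGroup G] (σ : ℕ → G) : ℕ → G
  | 0 => σ 0
  | j + 1 => σ (j + 1) - σ j

theorem sum_range_succ_increments {G : Type*} [AddCommGroup G] (σ : ℕ → G) (k : ℕ) :
    ∑ j ∈ range (k + 1), increments σ j = σ k := by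
  induction k with
  | zero => simp [increments]
  | succ k ih => rw [sum_range_succ, ih, increments, add_sub_cancel]

theorem sum_range_succ_increments_mul_sub {R : Type*} [CommRing R] {X y σ : ℕ → R}
    (hσ : ∀ k, σ k * (X (k + 1) - X k) = y (k + 1) - y k) (x : R) (k : ℕ) :
    ∑ j ∈ range (k + 1), increments σ j * (x - X j) = y k - y 0 + σ k * (x - X k) := by
  induction k with
  | zero => simp [increments]
  | succ k ih =>
    rw [sum_range_succ, ih, increments]
    linear_combination hσ k

theorem sum_range_mul_relu_of_mem_Icc {X : ℕ → ℝ} (hX : Monotone X) (w : ℕ → ℝ) {n k : ℕ}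
    (hk : k < n) {x : ℝ} (hx : x ∈ Set.Icc (X k) (X (k + 1))) :
    ∑ j ∈ range n, w j * max (x - X j) 0 = ∑ j ∈ range (k + 1), w j * (x - X j) := by
  rw [← sum_range_add_sum_Ico _ hk, sum_eq_zero (s := Ico (k + 1) n), add_zero]
  · refine sum_congr rfl fun j hj => ?_
    have hjk : j ≤ k := Nat.lt_succ_iff.1 (mem_range.1 hj)
    rw [max_eq_left (sub_nonneg.2 ((hX hjk).trans hx.1))]
  · intro j hj
    rw [max_eq_right (sub_nonpos.2 (hx.2.trans (hX (mem_Ico.1 hj).1))), mul_zero]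

theorem exists_lt_mem_Icc_succ {α : Type*} [LinearOrder α] {X : ℕ → α} {n : ℕ} (hn : 0 < n)
    {x : α} (hx : x ∈ Set.Icc (X 0) (X n)) : ∃ k < n, x ∈ Set.Icc (X k) (X (k + 1)) := by
  classical
  obtain ⟨m, rfl⟩ : ∃ m, n = m + 1 := ⟨n - 1, by omega⟩
  have hex : ∃ k, x ≤ X (k + 1) := ⟨m, hx.2⟩
  refine ⟨Nat.find hex, Nat.lt_succ_of_le (Nat.find_min' hex hx.2), ?_, Nat.find_spec hex⟩
  rcases h : Nat.find hex with _ | k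
  · exact hx.1
  · exact le_of_not_ge (Nat.find_min hex (h ▸ k.lt_succ_self))

theorem slope_mul_sub {k : Type*} [Field k] (f : k → k) (a b : k) :
    slope f a b * (b - a) = f b - f a := by
  simpa [smul_eq_mul, mul_comm] using sub_smul_slope f a b

theorem abs_add_slope_mul_sub_le {g : ℝ → ℝ} (hg : Antitone g) {p q x : ℝ}
    (hx : x ∈ Set.Icc p q) : |g p + slope g p q * (x - p) - g x| ≤ g p - g q := by
  have hslope : slope g p q ≤ 0 :=
    (hg.antitoneOn Set.univ).slope_nonpos (Set.mem_univ p) (Set.mem_univ q)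
  have hspan := slope_mul_sub g p q
  have h1 : slope g p q * (q - p) ≤ slope g p q * (x - p) :=
    mul_le_mul_of_nonpos_left (by linarith [hx.2]) hslope
  have h2 : slope g p q * (x - p) ≤ 0 := mul_nonpos_of_nonpos_of_nonneg hslope (by linarith [hx.1])
  rw [abs_le]
  constructor <;> linarith [hg hx.1, hg hx.2]

theorem Fin.sum_Iic_eq_sum_range {M : Type*} [AddCommMonoid M] {n : ℕ} (f : ℕ → M) (J : Fin n) :
    ∑ j ∈ Iic J, f j = ∑ j ∈ range (J + 1), f j := by
  rw [Nat.range_succ_eq_Iic, ← Fin.map_valEmbedding_Iic, sum_map]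
  rfl

theorem exists_abs_sum_increments_slope_mul_relu_sub_le {g : ℝ → ℝ} (hg : Antitone g)
    {X : ℕ → ℝ} (hX : Monotone X) {n : ℕ} (hn : 0 < n) {x : ℝ} (hx : x ∈ Set.Icc (X 0) (X n)) :
    ∃ k < n, |∑ j ∈ range n, increments (fun i => slope g (X i) (X (i + 1))) j * max (x - X j) 0
      + g (X 0) - g x| ≤ g (X k) - g (X (k + 1)) := by
  obtain ⟨k, hk, hxk⟩ := exists_lt_mem_Icc_succ hn hx
  refine ⟨k, hk, ?_⟩
  rw [sum_range_mul_relu_of_mem_Icc hX _ hk hxk,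
    sum_range_succ_increments_mul_sub (y := fun i => g (X i)) fun i => slope_mul_sub g _ _]
  convert abs_add_slope_mul_sub_le hg hxk using 2
  ring

/-- Universal approximation of a Lipschitz nonincreasing function by a
monotonicity-constrained single-hidden-layer ReLU network: for any
nonincreasing `Lg`-Lipschitz `g`, any interval `[a, b]` and any `η > 0`, there
is a network `N(x) = Σ_h w_h ReLU(x - bias_h) + β` with nondecreasing biases
and nonpositive partial sums of weights such that `|N(x) - g(x)| ≤ η` on
`[a, b]`; moreover `H` can be taken with `H ≥ Lg (b - a)/η`. -/
theorem stmt_13 (g : ℝ → ℝ) (Lg : ℝ) (hg : Antitone g)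
    (hlip : ∀ x y, |g x - g y| ≤ Lg * |x - y|)
    (a b : ℝ) (hab : a < b) (η : ℝ) (hη : 0 < η) :
    ∃ (H : ℕ), 0 < H ∧ Lg * (b - a) / η ≤ (H : ℝ) ∧
      ∃ (w : Fin H → ℝ) (bias : Fin H → ℝ) (β : ℝ),
        Monotone bias ∧
        (∀ J : Fin H, ∑ j ∈ Finset.Iic J, w j ≤ 0) ∧
        ∀ x ∈ Set.Icc a b,
          |((∑ h : Fin H, w h * max (x - bias h) 0) + β) - g x| ≤ η := by
  obtain ⟨H, hH, hHη⟩ : ∃ H : ℕ, 0 < H ∧ Lg * (b - a) / η ≤ H :=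
    ⟨⌈Lg * (b - a) / η⌉₊ + 1, Nat.succ_pos _, (Nat.le_ceil _).trans (by push_cast; linarith)⟩
  have hHpos : (0 : ℝ) < H := Nat.cast_pos.2 hH
  set δ := (b - a) / H with hδ
  have hδ0 : 0 ≤ δ := div_nonneg (by linarith) hHpos.le
  set X : ℕ → ℝ := fun j => a + j * δ
  have hX : Monotone X := fun i j hij => by simp only [X]; gcongr
  have hXstep : ∀ k, X (k + 1) - X k = δ := fun k => by simp only [X]; push_cast; ring
  have hX0 : X 0 = a := by simp [X]
  have hXH : X H = b := by simp only [X, δ]; field_simp; ring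
  have hLδ : Lg * δ ≤ η := by
    rw [div_le_iff₀ hη] at hHη
    rw [hδ, ← mul_div_assoc, div_le_iff₀ hHpos]
    linarith
  set σ : ℕ → ℝ := fun i => slope g (X i) (X (i + 1))
  refine ⟨H, hH, hHη, fun j => increments σ j, fun j => X j, g (X 0), fun i j hij => hX hij,
    fun J => ?_, fun x hx => ?_⟩
  · rw [Fin.sum_Iic_eq_sum_range (increments σ), sum_range_succ_increments]
    exact (hg.antitoneOn Set.univ).slope_nonpos (Set.mem_univ _) (Set.mem_univ _)
  · rw [Fin.sum_univ_eq_sum_range (fun j => increments σ j * max (x - X j) 0)]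
    obtain ⟨k, -, hk⟩ := exists_abs_sum_increments_slope_mul_relu_sub_le hg hX hH
      (x := x) (by rwa [hX0, hXH])
    calc _ ≤ g (X k) - g (X (k + 1)) := hk
      _ ≤ Lg * |X k - X (k + 1)| := (le_abs_self _).trans (hlip _ _)
      _ = Lg * δ := by rw [abs_sub_comm, hXstep, abs_of_nonneg hδ0]
      _ ≤ η := hLδ
end
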